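/- If the sequence (y_n) is the invert transform of (x_n), then for all 1 ≤ k ≤ n: k!·B_{n,k}(1!·y_1, 2!·y_2, 3!·y_3, ...) = Σ_{i=k}^{n} C(i-1, k-1) · i! · B_{n,i}(1!·x_1, 2!·x_2, 3!·x_3, ...). -/

import Mathlib

/-!
Put `X = ∑_{i ≥ 1} x_i t^i` and `Y = ∑_{i ≥ 1} y_i t^i`. The invert transform says `Y = X + X Y`,
i.e. `Y = X / (1 - X)`, and the Bell recurrence says `k! B_{n,k}(1! z_1, 2! z_2, …) = n! [t^n] Z^k`.
Hence `Y^k = X^k (1 - X)^{-k} = ∑_{i ≥ k} C(i-1, k-1) X^i`, and the identity is the coefficient of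
`t^n`. As `X^i = O(t^i)`, only `i ≤ n` contribute, so the expansion is only needed modulo
`t^(n+1)`; there it follows from `y = x + x y` by induction on `k`, in any commutative ring in which
`t` divides `x` and `y`.
-/

/-- The partial (exponential) Bell polynomials, defined by `B 0 0 = 1`, `B n 0 = 0` for
`n ≥ 1`, and the recurrence `k * B n k = ∑_{i=1}^{n-k+1} C(n,i) * x i * B (n-i) (k-1)`. -/
def bell (x : ℕ → ℚ) : ℕ → ℕ → ℚ
  | 0, 0 => 1
  | _ + 1, 0 => 0
  | n, k + 1 =>
    ((k : ℚ) + 1)⁻¹ * ∑ i ∈ Finset.Icc 1 (n - k), (n.choose i : ℚ) * x i * bell x (n - i) k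

open Finset PowerSeries

section InvertRelation

variable {R : Type*} [CommRing R] {x y : R}

theorem sub_sum_range_pow_succ_eq (hxy : y = x + x * y) (m : ℕ) :
    y - ∑ j ∈ range m, x ^ (j + 1) = x ^ m * y := by
  induction m with
  | zero => simp
  | succ m ih =>
    rw [sum_range_succ]
    linear_combination ih + x ^ m * hxy

theorem sum_range_succ_choose_succ_mul_pow (x : R) (k m : ℕ) :
    ∑ j ∈ range (m + 1), (j.choose (k + 1) : R) * x ^ (j + 1) =
      x * (∑ j ∈ range m, (j.choose k : R) * x ^ (j + 1) +
        ∑ j ∈ range m, (j.choose (k + 1) : R) * x ^ (j + 1)) := by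
  rw [sum_range_succ', Nat.choose_zero_succ, Nat.cast_zero, zero_mul, add_zero,
    ← sum_add_distrib, mul_sum]
  refine sum_congr rfl fun j _ => ?_
  rw [Nat.choose_succ_succ', Nat.cast_add]
  ring

theorem dvd_pow_succ_sub_sum_choose_mul_pow (hxy : y = x + x * y) {d : R} (hx : d ∣ x)
    (hy : d ∣ y) (k m : ℕ) :
    d ^ (m + 1) ∣ y ^ (k + 1) - ∑ j ∈ range m, (j.choose k : R) * x ^ (j + 1) := by
  induction k generalizing m with
  | zero =>
    simp only [zero_add, pow_one, Nat.choose_zero_right, Nat.cast_one, one_mul]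
    rw [sub_sum_range_pow_succ_eq hxy, pow_succ]
    exact mul_dvd_mul (pow_dvd_pow_of_dvd hx m) hy
  | succ k ih =>
    induction m with
    | zero => simpa using dvd_pow hy (Nat.succ_ne_zero (k + 1))
    | succ m ihm =>
      have split : y ^ (k + 2) - ∑ j ∈ range (m + 1), (j.choose (k + 1) : R) * x ^ (j + 1) =
          x * (y ^ (k + 1) - ∑ j ∈ range m, (j.choose k : R) * x ^ (j + 1)) +
            x * (y ^ (k + 2) - ∑ j ∈ range m, (j.choose (k + 1) : R) * x ^ (j + 1)) := by
        rw [sum_range_succ_choose_succ_mul_pow]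
        linear_combination y ^ (k + 1) * hxy
      rw [split, pow_succ']
      exact dvd_add (mul_dvd_mul hx (ih m)) (mul_dvd_mul hx ihm)

end InvertRelation

theorem sum_Icc_choose_pred_mul_eq_sum_range {R : Type*} [Semiring R] (g : ℕ → R) (k n : ℕ) :
    ∑ i ∈ Icc (k + 1) n, ((i - 1).choose k : R) * g i =
      ∑ j ∈ range n, (j.choose k : R) * g (j + 1) := by
  have hzero : ∀ i ∈ Icc 1 n, i ∉ Icc (k + 1) n → ((i - 1).choose k : R) * g i = 0 := by
    intro i hi hik
    simp only [mem_Icc] at hi hik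
    rw [Nat.choose_eq_zero_of_lt (by omega), Nat.cast_zero, zero_mul]
  rw [sum_subset (Icc_subset_Icc_left (Nat.le_add_left 1 k)) hzero, ← Ico_add_one_right_eq_Icc,
    sum_Ico_eq_sum_range, Nat.add_sub_cancel]
  simp only [add_comm 1, Nat.add_sub_cancel]

section GeneratingFunction

variable {R : Type*} [CommSemiring R]

-- The constant term is `0`: neither `bell` nor the invert transform ever reads `z 0`.
noncomputable def ogf (z : ℕ → R) : R⟦X⟧ :=
  mk fun i => if i = 0 then 0 else z i

theorem constantCoeff_ogf (z : ℕ → R) : constantCoeff (ogf z) = 0 := by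
  simp [ogf]

theorem coeff_ogf (z : ℕ → R) {n : ℕ} (hn : n ≠ 0) : coeff n (ogf z) = z n := by
  simp [ogf, hn]

theorem coeff_ogf_mul (z : ℕ → R) (f : R⟦X⟧) (n : ℕ) :
    coeff n (ogf z * f) = ∑ i ∈ Icc 1 n, z i * coeff (n - i) f := by
  rw [coeff_mul, Nat.sum_antidiagonal_eq_sum_range_succ (fun i j => coeff i (ogf z) * coeff j f),
    sum_range_succ', ← Ico_add_one_right_eq_Icc, sum_Ico_eq_sum_range, Nat.add_sub_cancel]
  simp [ogf, add_comm 1]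

theorem coeff_ogf_pow_of_lt (z : ℕ → R) {n k : ℕ} (h : n < k) :
    coeff n (ogf z ^ k) = 0 :=
  X_pow_dvd_iff.1 (pow_dvd_pow_of_dvd (X_dvd_iff.2 (constantCoeff_ogf z)) k) n h

theorem ogf_eq_add_mul_of_invert {x y : ℕ → R}
    (hy : ∀ n, 1 ≤ n → y n = x n + ∑ i ∈ Ico 1 n, x i * y (n - i)) :
    ogf y = ogf x + ogf x * ogf y := by
  ext (_ | n)
  · simp [ogf]
  · rw [map_add, coeff_ogf_mul, ← Ico_add_one_right_eq_Icc, sum_Ico_succ_top (by omega),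
      Nat.sub_self, coeff_zero_eq_constantCoeff_apply, constantCoeff_ogf, mul_zero, add_zero,
      coeff_ogf _ n.succ_ne_zero, coeff_ogf _ n.succ_ne_zero, hy (n + 1) (by omega)]
    refine congrArg _ (sum_congr rfl fun i hi => ?_)
    rw [coeff_ogf _ (by grind)]

theorem coeff_ogf_pow_succ (z : ℕ → R) (n k : ℕ) :
    coeff n (ogf z ^ (k + 1)) = ∑ i ∈ Icc 1 (n - k), z i * coeff (n - i) (ogf z ^ k) := by
  rw [pow_succ', coeff_ogf_mul]
  refine (sum_subset (Icc_subset_Icc_right (Nat.sub_le n k)) fun i hi hik => ?_).symm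
  simp only [mem_Icc] at hi hik
  rw [coeff_ogf_pow_of_lt z (by omega), mul_zero]

end GeneratingFunction

theorem bell_succ (x : ℕ → ℚ) (n k : ℕ) :
    bell x n (k + 1) =
      ((k : ℚ) + 1)⁻¹ * ∑ i ∈ Icc 1 (n - k), (n.choose i : ℚ) * x i * bell x (n - i) k := by
  cases n <;> rfl

theorem factorial_mul_bell_eq_factorial_mul_coeff_ogf_pow (z : ℕ → ℚ) (n k : ℕ) :
    (k.factorial : ℚ) * bell (fun i => (i.factorial : ℚ) * z i) n k =
      n.factorial * coeff n (ogf z ^ k) := by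
  induction k generalizing n with
  | zero => cases n <;> simp [bell, coeff_one]
  | succ k ih =>
    calc ((k + 1).factorial : ℚ) * bell (fun i => (i.factorial : ℚ) * z i) n (k + 1)
        = ∑ i ∈ Icc 1 (n - k), (n.choose i : ℚ) * i.factorial * z i *
            (k.factorial * bell (fun i => (i.factorial : ℚ) * z i) (n - i) k) := by
          rw [bell_succ, mul_sum, mul_sum]
          refine sum_congr rfl fun i _ => ?_
          push_cast [Nat.factorial_succ]
          field_simp
      _ = ∑ i ∈ Icc 1 (n - k), (n.choose i * i.factorial * (n - i).factorial : ℕ) *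
            (z i * coeff (n - i) (ogf z ^ k)) := by
          refine sum_congr rfl fun i _ => ?_
          rw [ih]
          push_cast
          ring
      _ = n.factorial * coeff n (ogf z ^ (k + 1)) := by
          rw [coeff_ogf_pow_succ, mul_sum]
          refine sum_congr rfl fun i hi => ?_
          rw [Nat.choose_mul_factorial_mul_factorial (by simp only [mem_Icc] at hi; omega)]

theorem stmt19_general (x y : ℕ → ℚ)
    (hy : ∀ n, 1 ≤ n → y n = x n + ∑ i ∈ Finset.Ico 1 n, x i * y (n - i))
    (n k : ℕ) (hk : 1 ≤ k) :
    (k.factorial : ℚ) * bell (fun i => (i.factorial : ℚ) * y i) n k =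
      ∑ i ∈ Finset.Icc k n,
        ((i - 1).choose (k - 1) : ℚ) * (i.factorial : ℚ) *
          bell (fun j => (j.factorial : ℚ) * x j) n i := by
  obtain ⟨k, rfl⟩ := Nat.exists_eq_add_of_le' hk
  have hcoeff : coeff n (ogf y ^ (k + 1)) =
      ∑ j ∈ range n, (j.choose k : ℚ) * coeff n (ogf x ^ (j + 1)) := by
    have hdvd := dvd_pow_succ_sub_sum_choose_mul_pow (ogf_eq_add_mul_of_invert hy)
      (X_dvd_iff.2 (constantCoeff_ogf x)) (X_dvd_iff.2 (constantCoeff_ogf y)) k n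
    rw [← sub_eq_zero, ← X_pow_dvd_iff.1 hdvd n n.lt_succ_self, map_sub, map_sum]
    simp only [← map_natCast (C (R := ℚ)), coeff_C_mul]
  calc ((k + 1).factorial : ℚ) * bell (fun i => (i.factorial : ℚ) * y i) n (k + 1)
      = ∑ j ∈ range n, (j.choose k : ℚ) *
          ((j + 1).factorial * bell (fun i => (i.factorial : ℚ) * x i) n (j + 1)) := by
        rw [factorial_mul_bell_eq_factorial_mul_coeff_ogf_pow, hcoeff, mul_sum]
        refine sum_congr rfl fun j _ => ?_
        rw [factorial_mul_bell_eq_factorial_mul_coeff_ogf_pow]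
        ring
    _ = _ := by
        rw [Nat.add_sub_cancel]
        simp only [mul_assoc]
        exact (sum_Icc_choose_pred_mul_eq_sum_range
          (fun i => (i.factorial : ℚ) * bell (fun j => (j.factorial : ℚ) * x j) n i) k n).symm

theorem stmt19 (x y : ℕ → ℚ)
    (hy : ∀ n, 1 ≤ n → y n = x n + ∑ i ∈ Finset.Ico 1 n, x i * y (n - i))
    (n k : ℕ) (hk : 1 ≤ k) (hkn : k ≤ n) :
    (k.factorial : ℚ) * bell (fun i => (i.factorial : ℚ) * y i) n k =
      ∑ i ∈ Finset.Icc k n,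
        ((i - 1).choose (k - 1) : ℚ) * (i.factorial : ℚ) *
          bell (fun j => (j.factorial : ℚ) * x j) n i :=
  stmt19_general x y hy n k hk
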